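/- arXiv:2602.07571 — 5 statements merged into one kernel-verified Lean document; each statement's English description precedes it below -/
import Mathlib

section
/- Let N ≥ 1, h = 1/N, let Δt > 0, β ∈ ℝ, γ > 0, and let m be a grid function with |m(I)| = 1 for every I. Then there exists a unique grid function ṽ such that (ṽ(I) − m(I))/Δt = −β m(I) × (Δ_h ṽ)(I) − γ m(I) × (m(I) × (Δ_h ṽ)(I)) for every I. -/
open scoped BigOperators RealInnerProductSpace

noncomputable section

/-- Euclidean 3-space. -/
abbrev E3 : Type := EuclideanSpace ℝ (Fin 3)

/-- Cross product on `E3`. -/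
def cross3 (a b : E3) : E3 :=
  (WithLp.equiv 2 (Fin 3 → ℝ)).symm
    ![a 1 * b 2 - a 2 * b 1, a 2 * b 0 - a 0 * b 2, a 0 * b 1 - a 1 * b 0]

/-- Index set of the triply periodic grid. -/
abbrev Idx (N : ℕ) := Fin 3 → ZMod N

/-- Grid functions. -/
abbrev GridFun (N : ℕ) := Idx N → E3

/-- Forward difference in direction `r`. -/
def fd {N : ℕ} (h : ℝ) (r : Fin 3) (f : GridFun N) (I : Idx N) : E3 :=
  (1 / h) • (f (I + Pi.single r 1) - f I)

/-- Centered average in direction `r`. -/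
def ca {N : ℕ} (r : Fin 3) (f : GridFun N) (I : Idx N) : E3 :=
  ((1 : ℝ) / 2) • (f (I + Pi.single r 1) + f I)

/-- Discrete Laplacian. -/
def dlap {N : ℕ} (h : ℝ) (f : GridFun N) (I : Idx N) : E3 :=
  ∑ r : Fin 3, (1 / h ^ 2) • (f (I + Pi.single r 1) - (2 : ℝ) • f I + f (I - Pi.single r 1))

/-- Squared discrete `L²` norm. -/
def l2sq {N : ℕ} [NeZero N] (h : ℝ) (f : GridFun N) : ℝ :=
  h ^ 3 * ∑ I : Idx N, ‖f I‖ ^ 2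

/-- Squared discrete gradient (`H¹` seminorm). -/
def gradsq {N : ℕ} [NeZero N] (h : ℝ) (f : GridFun N) : ℝ :=
  h ^ 3 * ∑ I : Idx N, ∑ r : Fin 3, ‖fd h r f I‖ ^ 2

/-- Discrete `ℓᵖ` norm, for real `p`. -/
def pnorm {N : ℕ} [NeZero N] (h p : ℝ) (f : GridFun N) : ℝ :=
  (h ^ 3 * ∑ I : Idx N, ‖f I‖ ^ p) ^ (1 / p)

/-- Discrete `ℓ^∞` norm. -/
def inorm {N : ℕ} [NeZero N] (f : GridFun N) : ℝ :=
  ⨆ I : Idx N, ‖f I‖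

/-- Discrete `ℓ^∞` norm of the gradient. -/
def ginorm {N : ℕ} [NeZero N] (h : ℝ) (f : GridFun N) : ℝ :=
  ⨆ I : Idx N, ⨆ r : Fin 3, ‖fd h r f I‖

/-!
Write the scheme as `L v = m` with `L v = v + Δt (β m × Δ_h v + γ m × (m × Δ_h v))`, a linear
endomorphism of a finite-dimensional space, so it suffices that `L` is injective. Pairing
`L v = 0` with `Δ_h v` at each node kills the `β`-term and turns the `γ`-term into
`-Δt γ |m × Δ_h v|²`, while summation by parts gives `Σ_I ⟨v, Δ_h v⟩ ≤ 0`. Hence `m × Δ_h v`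
vanishes at every node, and then so does `v = -Δt (β m × Δ_h v + γ m × (m × Δ_h v))`.
-/

open Finset

lemma cross3_add_right (a b c : E3) : cross3 a (b + c) = cross3 a b + cross3 a c := by
  ext i
  fin_cases i <;>
    simp only [PiLp.add_apply, cross3, WithLp.equiv_symm_apply, Fin.isValue, Fin.zero_eta,
      Fin.mk_one, Fin.reduceFinMk, Matrix.cons_val_zero, Matrix.cons_val_one, Matrix.cons_val] <;>
    ring

lemma cross3_smul_right (a : E3) (t : ℝ) (b : E3) : cross3 a (t • b) = t • cross3 a b := by
  ext i
  fin_cases i <;>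
    simp only [PiLp.smul_apply, smul_eq_mul, cross3, WithLp.equiv_symm_apply, Fin.isValue,
      Fin.zero_eta, Fin.mk_one, Fin.reduceFinMk, Matrix.cons_val_zero, Matrix.cons_val_one,
      Matrix.cons_val] <;>
    ring

lemma cross3_zero_right (a : E3) : cross3 a 0 = 0 := by
  simpa using cross3_smul_right a 0 0

lemma inner_cross3_self_right (a b : E3) : ⟪cross3 a b, b⟫ = 0 := by
  simp only [cross3, WithLp.equiv_symm_apply, PiLp.inner_apply, RCLike.inner_apply,
    Real.ringHom_apply, Fin.sum_univ_three, Fin.isValue, Matrix.cons_val_zero, Matrix.cons_val_one,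
    Matrix.cons_val]
  ring

lemma inner_cross3_cross3_self (a b : E3) : ⟪cross3 a (cross3 a b), b⟫ = -‖cross3 a b‖ ^ 2 := by
  simp only [cross3, WithLp.equiv_symm_apply, PiLp.inner_apply, RCLike.inner_apply,
    Real.ringHom_apply, Fin.sum_univ_three, EuclideanSpace.norm_sq_eq, Real.norm_eq_abs, sq_abs,
    Fin.isValue, Matrix.cons_val_zero, Matrix.cons_val_one, Matrix.cons_val]
  ring

lemma sum_inner_second_difference {G F : Type*} [AddCommGroup G] [Fintype G]
    [NormedAddCommGroup F] [InnerProductSpace ℝ F] (v : G → F) (e : G) :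
    ∑ I, ⟪v I, v (I + e) - (2 : ℝ) • v I + v (I - e)⟫ = -∑ I, ‖v (I + e) - v I‖ ^ 2 := by
  have shift : ∑ I, ⟪v I, v I - v (I - e)⟫ = ∑ I, ⟪v (I + e), v (I + e) - v I⟫ :=
    (Fintype.sum_equiv (Equiv.addRight e) _ _ fun I => by simp).symm
  calc ∑ I, ⟪v I, v (I + e) - (2 : ℝ) • v I + v (I - e)⟫
      = ∑ I, (⟪v I, v (I + e) - v I⟫ - ⟪v I, v I - v (I - e)⟫) := by
        refine sum_congr rfl fun I _ => ?_
        rw [← inner_sub_right]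
        congr 1
        module
    _ = ∑ I, (⟪v I, v (I + e) - v I⟫ - ⟪v (I + e), v (I + e) - v I⟫) := by
        rw [sum_sub_distrib, sum_sub_distrib, shift]
    _ = -∑ I, ‖v (I + e) - v I‖ ^ 2 := by
        rw [← sum_neg_distrib]
        refine sum_congr rfl fun I _ => ?_
        rw [← inner_sub_left, ← neg_sub, inner_neg_left, real_inner_self_eq_norm_sq]

lemma add_smul_eq_iff_one_div_smul_sub {V : Type*} [AddCommGroup V] [Module ℝ V] {t : ℝ}
    (ht : t ≠ 0) (x y z : V) : x + t • y = z ↔ (1 / t) • (x - z) = -y := by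
  constructor
  · rintro rfl
    rw [sub_add_cancel_left, smul_neg, smul_smul, one_div_mul_cancel ht, one_smul]
  · intro H
    rw [← neg_neg y, ← H, smul_neg, smul_smul, mul_one_div_cancel ht, one_smul]
    abel

section Grid

variable {N : ℕ}

lemma dlap_add (h : ℝ) (u v : GridFun N) : dlap h (u + v) = dlap h u + dlap h v := by
  funext I
  simp only [dlap, Pi.add_apply, ← sum_add_distrib, ← smul_add]
  refine sum_congr rfl fun r _ => ?_
  congr 1
  module

lemma dlap_smul (h t : ℝ) (v : GridFun N) : dlap h (t • v) = t • dlap h v := by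
  funext I
  simp only [dlap, Pi.smul_apply, smul_sum]
  refine sum_congr rfl fun r _ => ?_
  module

lemma sum_inner_dlap_nonpos [NeZero N] (h : ℝ) (v : GridFun N) :
    ∑ I, ⟪v I, dlap h v I⟫ ≤ 0 := by
  simp_rw [dlap, inner_sum, real_inner_smul_right]
  rw [sum_comm]
  refine sum_nonpos fun r _ => ?_
  rw [← mul_sum, sum_inner_second_difference]
  exact mul_nonpos_of_nonneg_of_nonpos (by positivity)
    (neg_nonpos.2 (sum_nonneg fun I _ => sq_nonneg _))

def llgImplicitOp (h Δt β γ : ℝ) (m : GridFun N) : GridFun N →ₗ[ℝ] GridFun N where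
  toFun v I := v I + Δt • (β • cross3 (m I) (dlap h v I)
    + γ • cross3 (m I) (cross3 (m I) (dlap h v I)))
  map_add' u v := by
    funext I
    simp only [dlap_add, Pi.add_apply, cross3_add_right]
    module
  map_smul' t v := by
    funext I
    simp only [dlap_smul, Pi.smul_apply, cross3_smul_right, RingHom.id_apply]
    module

lemma llgImplicitOp_apply (h Δt β γ : ℝ) (m v : GridFun N) (I : Idx N) :
    llgImplicitOp h Δt β γ m v I = v I + Δt • (β • cross3 (m I) (dlap h v I)
      + γ • cross3 (m I) (cross3 (m I) (dlap h v I))) :=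
  rfl

lemma llgImplicitOp_injective [NeZero N] (h : ℝ) {Δt γ : ℝ} (hΔt : 0 < Δt) (hγ : 0 < γ)
    (β : ℝ) (m : GridFun N) : Function.Injective (llgImplicitOp h Δt β γ m) := by
  rw [← LinearMap.ker_eq_bot, LinearMap.ker_eq_bot']
  intro v hv
  set w := dlap h v
  have hv_eq : ∀ I, v I = -(Δt • (β • cross3 (m I) (w I)
      + γ • cross3 (m I) (cross3 (m I) (w I)))) := fun I =>
    eq_neg_of_add_eq_zero_left (congrFun hv I)
  have energy : ∑ I, ⟪v I, w I⟫ = Δt * γ * ∑ I, ‖cross3 (m I) (w I)‖ ^ 2 := by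
    rw [mul_sum]
    refine sum_congr rfl fun I _ => ?_
    rw [hv_eq I, inner_neg_left, real_inner_smul_left, inner_add_left, real_inner_smul_left,
      real_inner_smul_left, inner_cross3_self_right, inner_cross3_cross3_self]
    ring
  have hsum : ∑ I, ‖cross3 (m I) (w I)‖ ^ 2 = 0 := by
    have hnonneg : 0 ≤ ∑ I, ‖cross3 (m I) (w I)‖ ^ 2 := sum_nonneg fun I _ => sq_nonneg _
    have hpos : 0 < Δt * γ := mul_pos hΔt hγ
    nlinarith [sum_inner_dlap_nonpos h v]
  have hcross : ∀ I, cross3 (m I) (w I) = 0 := fun I => by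
    simpa using (sum_eq_zero_iff_of_nonneg fun I _ => sq_nonneg _).1 hsum I (mem_univ I)
  funext I
  simp [hv_eq I, hcross I, cross3_zero_right]

lemma llgImplicitOp_eq_iff {Δt : ℝ} (hΔt : Δt ≠ 0) (h β γ : ℝ) (m v : GridFun N) :
    llgImplicitOp h Δt β γ m v = m ↔ ∀ I, (1 / Δt) • (v I - m I)
      = -(β • cross3 (m I) (dlap h v I)) - γ • cross3 (m I) (cross3 (m I) (dlap h v I)) := by
  simp only [funext_iff, llgImplicitOp_apply]
  refine forall_congr' fun I => ?_
  rw [add_smul_eq_iff_one_div_smul_sub hΔt, neg_add']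

end Grid

theorem statement5_general (N : ℕ) [NeZero N] (h Δt β γ : ℝ)
    (hΔt : 0 < Δt) (hγ : 0 < γ) (m : GridFun N) :
    ∃! v : GridFun N, ∀ I : Idx N,
      (1 / Δt) • (v I - m I)
        = -(β • cross3 (m I) (dlap h v I))
            - γ • cross3 (m I) (cross3 (m I) (dlap h v I)) := by
  have hinj := llgImplicitOp_injective h hΔt hγ β m
  have hbij : Function.Bijective (llgImplicitOp h Δt β γ m) :=
    ⟨hinj, LinearMap.injective_iff_surjective.mp hinj⟩
  simpa only [llgImplicitOp_eq_iff hΔt.ne'] using hbij.existsUnique m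

/-- unique solvability of the intermediate stage of the fully discrete scheme. -/
theorem statement5 (N : ℕ) [NeZero N] (hN : 1 ≤ N) (h Δt β γ : ℝ) (hh : h = 1 / (N : ℝ))
    (hΔt : 0 < Δt) (hγ : 0 < γ) (m : GridFun N) (hm : ∀ I, ‖m I‖ = 1) :
    ∃! v : GridFun N, ∀ I : Idx N,
      (1 / Δt) • (v I - m I)
        = -(β • cross3 (m I) (dlap h v I))
            - γ • cross3 (m I) (cross3 (m I) (dlap h v I)) :=
  statement5_general N h Δt β γ hΔt hγ m
end
end

section
/- Let N ≥ 1, h = 1/N, Δt > 0, β ∈ ℝ, γ > 0, let m be a grid function with |m(I)| = 1 for every I, and let ṽ be a grid function satisfying (ṽ(I) − m(I))/Δt = −β m(I) × (Δ_h ṽ)(I) − γ m(I) × (m(I) × (Δ_h ṽ)(I)) for every I. Then for every I one has the exact identity |ṽ(I)|^2 = 1 + Δt^2 · | m(I) × ( β (Δ_h ṽ)(I) + γ ( m(I) × (Δ_h ṽ)(I) ) ) |^2; in particular |ṽ(I)| ≥ 1 for every I. -/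
open scoped BigOperators RealInnerProductSpace

noncomputable section

/-! The scheme rearranges to `ṽ = m - Δt • c` with `c = m × (β Δ_h ṽ + γ m × Δ_h ṽ)`. As a cross
product with `m`, `c` is orthogonal to the unit vector `m`, so Pythagoras gives
`|ṽ|² = 1 + Δt² |c|² ≥ 1`. -/

open Matrix in
lemma cross3_eq_crossProduct (a b : E3) :
    cross3 a b = WithLp.toLp 2 (WithLp.ofLp a ⨯₃ WithLp.ofLp b) := rfl

lemma cross3_smul_add_smul (a x y : E3) (β γ : ℝ) :
    cross3 a (β • x + γ • y) = β • cross3 a x + γ • cross3 a y := by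
  simp only [cross3_eq_crossProduct, WithLp.ofLp_add, WithLp.ofLp_smul, map_add, map_smul,
    WithLp.toLp_add, WithLp.toLp_smul]

lemma inner_self_cross3 (a b : E3) : ⟪a, cross3 a b⟫ = 0 := by
  simp [cross3_eq_crossProduct, EuclideanSpace.inner_eq_star_dotProduct, dotProduct_comm,
    dot_self_cross]

lemma norm_sub_smul_sq_of_inner_eq_zero {F : Type*} [NormedAddCommGroup F]
    [InnerProductSpace ℝ F] {x y : F} (h : ⟪x, y⟫ = 0) (t : ℝ) :
    ‖x - t • y‖ ^ 2 = ‖x‖ ^ 2 + t ^ 2 * ‖y‖ ^ 2 := by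
  rw [norm_sub_sq_real, real_inner_smul_right, h, norm_smul, mul_pow, Real.norm_eq_abs, sq_abs]
  ring

lemma eq_sub_smul_of_one_div_smul_sub_eq_neg {K V : Type*} [Field K] [AddCommGroup V]
    [Module K V] {t : K} (ht : t ≠ 0) {v m c : V} (h : (1 / t) • (v - m) = -c) :
    v = m - t • c := by
  have hsub : v - m = t • -c := by rw [← h, smul_smul, mul_one_div_cancel ht, one_smul]
  rwa [smul_neg, sub_eq_iff_eq_add, neg_add_eq_sub] at hsub

theorem statement6_general (N : ℕ) (h Δt β γ : ℝ)
    (hΔt : 0 < Δt) (m v : GridFun N) (hm : ∀ I, ‖m I‖ = 1)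
    (hscheme : ∀ I : Idx N,
      (1 / Δt) • (v I - m I)
        = -(β • cross3 (m I) (dlap h v I))
            - γ • cross3 (m I) (cross3 (m I) (dlap h v I))) :
    ∀ I : Idx N,
      ‖v I‖ ^ 2
          = 1 + Δt ^ 2 *
              ‖cross3 (m I) (β • dlap h v I + γ • cross3 (m I) (dlap h v I))‖ ^ 2 ∧
        1 ≤ ‖v I‖ := by
  intro I
  set c := cross3 (m I) (β • dlap h v I + γ • cross3 (m I) (dlap h v I)) with hc
  have hv : v I = m I - Δt • c := by
    refine eq_sub_smul_of_one_div_smul_sub_eq_neg hΔt.ne' ?_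
    rw [hscheme I, hc, cross3_smul_add_smul]
    abel
  have hsq : ‖v I‖ ^ 2 = 1 + Δt ^ 2 * ‖c‖ ^ 2 := by
    rw [hv, norm_sub_smul_sq_of_inner_eq_zero (inner_self_cross3 _ _), hm, one_pow]
  refine ⟨hsq, (one_le_sq_iff₀ (norm_nonneg _)).1 ?_⟩
  rw [hsq]
  exact le_add_of_nonneg_right (by positivity)

/-- exact length identity for the intermediate solution, and `|ṽ| ≥ 1`. -/
theorem statement6 (N : ℕ) [NeZero N] (hN : 1 ≤ N) (h Δt β γ : ℝ) (hh : h = 1 / (N : ℝ))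
    (hΔt : 0 < Δt) (hγ : 0 < γ) (m v : GridFun N) (hm : ∀ I, ‖m I‖ = 1)
    (hscheme : ∀ I : Idx N,
      (1 / Δt) • (v I - m I)
        = -(β • cross3 (m I) (dlap h v I))
            - γ • cross3 (m I) (cross3 (m I) (dlap h v I))) :
    ∀ I : Idx N,
      ‖v I‖ ^ 2
          = 1 + Δt ^ 2 *
              ‖cross3 (m I) (β • dlap h v I + γ • cross3 (m I) (dlap h v I))‖ ^ 2 ∧
        1 ≤ ‖v I‖ :=
  statement6_general N h Δt β γ hΔt m v hm hscheme
end
end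

section
/- Let N ≥ 1, h = 1/N, Δt > 0, β ∈ ℝ, γ > 0, let m be a grid function with |m(I)| = 1 for every I, and let ṽ be a grid function satisfying (ṽ(I) − m(I))/Δt = −β m(I) × (Δ_h ṽ)(I) − γ m(I) × (m(I) × (Δ_h ṽ)(I)) for every I. Then ṽ(I)·m(I) = 1 for every I. -/
open scoped BigOperators RealInnerProductSpace

noncomputable section

lemma inner_cross3_left_self (a b : E3) : ⟪cross3 a b, a⟫ = 0 := by
  simp only [cross3, EuclideanSpace.inner_eq_star_dotProduct, dotProduct, Fin.sum_univ_three,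
    WithLp.equiv_symm_apply, Pi.star_apply, star_trivial, Matrix.cons_val_zero,
    Matrix.cons_val_one, Matrix.cons_val]
  ring

theorem statement12_general (N : ℕ) [NeZero N] (h Δt β γ : ℝ)
    (hΔt : 0 < Δt) (m v : GridFun N) (hm : ∀ I, ‖m I‖ = 1)
    (hscheme : ∀ I : Idx N,
      (1 / Δt) • (v I - m I)
        = -(β • cross3 (m I) (dlap h v I))
            - γ • cross3 (m I) (cross3 (m I) (dlap h v I))) :
    ∀ I : Idx N, ⟪v I, m I⟫ = 1 := by
  intro I
  have hupdate_orth : ⟪(1 / Δt) • (v I - m I), m I⟫ = 0 := by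
    rw [hscheme I, inner_sub_left, inner_neg_left, inner_smul_left, inner_smul_left,
      inner_cross3_left_self, inner_cross3_left_self]
    simp
  have hdiff_orth : ⟪v I - m I, m I⟫ = 0 := by
    simpa [inner_smul_left, hΔt.ne'] using hupdate_orth
  rw [inner_sub_left, real_inner_self_eq_norm_sq, hm I] at hdiff_orth
  linarith

/-- pointwise `ṽ · m = 1` for the intermediate solution. -/
theorem statement12 (N : ℕ) [NeZero N] (hN : 1 ≤ N) (h Δt β γ : ℝ) (hh : h = 1 / (N : ℝ))
    (hΔt : 0 < Δt) (hγ : 0 < γ) (m v : GridFun N) (hm : ∀ I, ‖m I‖ = 1)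
    (hscheme : ∀ I : Idx N,
      (1 / Δt) • (v I - m I)
        = -(β • cross3 (m I) (dlap h v I))
            - γ • cross3 (m I) (cross3 (m I) (dlap h v I))) :
    ∀ I : Idx N, ⟪v I, m I⟫ = 1 :=
  statement12_general N h Δt β γ hΔt m v hm hscheme
end
end

section
/- Let p, w ∈ ℝ^3 with ‖p‖ = 1 and ‖w‖ ≥ 1, and set q = w/‖w‖. Then the two-sided renormalization error estimate holds: ‖p − q‖^2 + ‖w − q‖^2 ≤ ‖p − w‖^2 ≤ 2 ( ‖p − q‖^2 + ‖w − q‖^2 ). -/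
open scoped BigOperators RealInnerProductSpace

noncomputable section

theorem norm_sub_sq_le_two_mul {E : Type*} [SeminormedAddCommGroup E] (a b c : E) :
    ‖a - c‖ ^ 2 ≤ 2 * (‖a - b‖ ^ 2 + ‖c - b‖ ^ 2) := calc
  ‖a - c‖ ^ 2 ≤ (‖a - b‖ + ‖c - b‖) ^ 2 := by
    rw [norm_sub_rev c b]
    gcongr
    exact norm_sub_le_norm_sub_add_norm_sub a b c
  _ ≤ 2 * (‖a - b‖ ^ 2 + ‖c - b‖ ^ 2) := add_sq_le

section InnerProductSpace

variable {F : Type*} [NormedAddCommGroup F] [InnerProductSpace ℝ F]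

theorem real_inner_sub_sub_smul_nonneg {p q : F} {t : ℝ} (hp : ‖p‖ ≤ 1) (hq : ‖q‖ = 1)
    (ht : 1 ≤ t) : 0 ≤ ⟪p - q, q - t • q⟫ := by
  have hpq : ⟪p, q⟫ ≤ 1 := calc
    ⟪p, q⟫ ≤ ‖p‖ * ‖q‖ := real_inner_le_norm p q
    _ ≤ 1 := by rw [hq, mul_one]; exact hp
  have hcross : ⟪p - q, q - t • q⟫ = (t - 1) * (1 - ⟪p, q⟫) := by
    rw [show q - t • q = (1 - t) • q by rw [sub_smul, one_smul], inner_smul_right,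
      inner_sub_left, real_inner_self_eq_norm_sq, hq]
    ring
  rw [hcross]
  exact mul_nonneg (sub_nonneg.mpr ht) (sub_nonneg.mpr hpq)

-- The cross term of `p - w = (p - q) + (q - w)` is nonnegative: `q - w` points along `-q`
-- and `p` lies in the unit ball.
theorem norm_sub_normalize_sq_add_le {p w : F} (hp : ‖p‖ ≤ 1) (hw : 1 ≤ ‖w‖) :
    ‖p - ‖w‖⁻¹ • w‖ ^ 2 + ‖w - ‖w‖⁻¹ • w‖ ^ 2 ≤ ‖p - w‖ ^ 2 := by
  set q := ‖w‖⁻¹ • w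
  have hw0 : w ≠ 0 := norm_pos_iff.mp (one_pos.trans_le hw)
  have hq : ‖q‖ = 1 := norm_smul_inv_norm hw0
  have hwq : w = ‖w‖ • q := (smul_inv_smul₀ (norm_ne_zero_iff.mpr hw0) w).symm
  have hcross : 0 ≤ ⟪p - q, q - w⟫ := by
    simpa only [← hwq] using real_inner_sub_sub_smul_nonneg hp hq hw
  calc ‖p - q‖ ^ 2 + ‖w - q‖ ^ 2 ≤ ‖p - q‖ ^ 2 + 2 * ⟪p - q, q - w⟫ + ‖q - w‖ ^ 2 := by
        rw [norm_sub_rev w q]; linarith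
    _ = ‖p - w‖ ^ 2 := by rw [← norm_add_sq_real, sub_add_sub_cancel]

end InnerProductSpace

/-- two-sided renormalization error estimate. -/
theorem statement15 (p w : E3) (hp : ‖p‖ = 1) (hw : 1 ≤ ‖w‖) :
    ‖p - ‖w‖⁻¹ • w‖ ^ 2 + ‖w - ‖w‖⁻¹ • w‖ ^ 2 ≤ ‖p - w‖ ^ 2 ∧
      ‖p - w‖ ^ 2 ≤ 2 * (‖p - ‖w‖⁻¹ • w‖ ^ 2 + ‖w - ‖w‖⁻¹ • w‖ ^ 2) :=
  ⟨norm_sub_normalize_sq_add_le hp.le hw, norm_sub_sq_le_two_mul p _ w⟩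
end
end

section
/- There exists an absolute constant C > 0 with the following property. Let N ≥ 1, h = 1/N, let p be a grid function with |p(I)| = 1 for every I, let w be a grid function with |w(I)| ≥ 1 for every I, and define the error grid functions ẽ = p − w and e(I) = p(I) − w(I)/|w(I)|. If ‖ẽ‖_∞ ≤ 1, then ‖∇_h e‖_2^2 ≤ C ( (1 + ‖ẽ‖_∞^2) ‖∇_h ẽ‖_2^2 + ‖∇_h p‖_∞^2 · ‖ẽ‖_2^2 ); in particular ‖∇_h e‖_2 ≤ M_0 ( ‖ẽ‖_2 + ‖∇_h ẽ‖_2 ) for a constant M_0 depending only on ‖∇_h p‖_∞. -/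
/-!
The renormalized error `e = p - w / ‖w‖` differs from `ẽ = p - w` by `(1 - ‖w‖⁻¹) • w`, and
`0 ≤ 1 - ‖w‖⁻¹ ≤ ‖w‖ - 1 ≤ ‖ẽ‖`. Differencing between neighbouring grid points `I` and `J`, the only
delicate term is the variation of `‖w‖`: expanding `‖w‖² = 1 - 2⟪p, ẽ⟫ + ‖ẽ‖²` bounds it by
`2 ‖δẽ‖ + ‖δp‖ ‖ẽ‖` instead of the naive `‖δẽ‖ + ‖δp‖`. Hence
`‖δe‖ ≤ 4 ‖δẽ‖ + ‖δp‖ (‖ẽ J‖ + ‖ẽ I‖)`, which is squared and summed over the periodic grid,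
where translation invariance of the sum absorbs the shifted term.
-/

open scoped BigOperators RealInnerProductSpace

noncomputable section

section Pointwise

variable {F : Type*} [NormedAddCommGroup F]

theorem one_sub_inv_norm_le {p w : F} (hp : ‖p‖ = 1) (hw : 1 ≤ ‖w‖) :
    1 - ‖w‖⁻¹ ≤ ‖p - w‖ := by
  have hw' : ‖w‖ - 1 ≤ ‖p - w‖ := by
    simpa [hp, norm_sub_rev] using norm_sub_norm_le w p
  have hpos : 0 < ‖w‖ := zero_lt_one.trans_le hw
  have := mul_inv_cancel₀ hpos.ne'
  nlinarith [sq_nonneg (‖w‖ - 1), inv_pos.2 hpos]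

variable [InnerProductSpace ℝ F]

theorem abs_norm_sub_norm_le_of_unit {p q w v : F} (hp : ‖p‖ = 1) (hq : ‖q‖ = 1)
    (hw : 1 ≤ ‖w‖) (hv : 1 ≤ ‖v‖) (hpw : ‖p - w‖ ≤ 1) (hqv : ‖q - v‖ ≤ 1) :
    |‖v‖ - ‖w‖| ≤ 2 * ‖(q - v) - (p - w)‖ + ‖q - p‖ * ‖p - w‖ := by
  have norm_sq : ∀ u z : F, ‖u‖ = 1 → ‖z‖ ^ 2 = 1 - 2 * ⟪u, u - z⟫ + ‖u - z‖ ^ 2 := by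
    intro u z hu
    simpa [hu] using norm_sub_sq_real u (u - z)
  have hsq : ‖v‖ ^ 2 - ‖w‖ ^ 2 = (‖q - v‖ - ‖p - w‖) * (‖q - v‖ + ‖p - w‖)
      - 2 * (⟪q, (q - v) - (p - w)⟫ + ⟪q - p, p - w⟫) := by
    rw [norm_sq q v hq, norm_sq p w hp]
    simp only [inner_sub_left, inner_sub_right, real_inner_self_eq_norm_sq, hp, hq]
    ring
  have h1 : |‖q - v‖ - ‖p - w‖| ≤ ‖(q - v) - (p - w)‖ := abs_norm_sub_norm_le _ _
  have h2 : |⟪q, (q - v) - (p - w)⟫| ≤ ‖(q - v) - (p - w)‖ := by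
    simpa [hq] using abs_real_inner_le_norm q ((q - v) - (p - w))
  have h3 : |⟪q - p, p - w⟫| ≤ ‖q - p‖ * ‖p - w‖ := abs_real_inner_le_norm _ _
  have hvw : 2 ≤ ‖v‖ + ‖w‖ := by linarith
  have hprod : |‖v‖ - ‖w‖| * (‖v‖ + ‖w‖) = |‖v‖ ^ 2 - ‖w‖ ^ 2| := by
    rw [← abs_of_pos (by linarith : 0 < ‖v‖ + ‖w‖), ← abs_mul]
    ring_nf
  have hbound : |‖v‖ ^ 2 - ‖w‖ ^ 2|
      ≤ 4 * ‖(q - v) - (p - w)‖ + 2 * (‖q - p‖ * ‖p - w‖) := by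
    rw [hsq]
    have hfac : |‖q - v‖ + ‖p - w‖| ≤ 2 := by
      rw [abs_of_nonneg (by positivity)]
      linarith
    calc _ ≤ |‖q - v‖ - ‖p - w‖| * |‖q - v‖ + ‖p - w‖|
          + 2 * (|⟪q, (q - v) - (p - w)⟫| + |⟪q - p, p - w⟫|) := by
          rw [← abs_mul]
          refine (abs_sub _ _).trans (add_le_add le_rfl ?_)
          rw [abs_mul, abs_two]
          exact mul_le_mul_of_nonneg_left (abs_add_le _ _) zero_le_two
      _ ≤ ‖(q - v) - (p - w)‖ * 2 + 2 * (‖(q - v) - (p - w)‖ + ‖q - p‖ * ‖p - w‖) := by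
          gcongr
      _ = _ := by ring
  nlinarith [abs_nonneg (‖v‖ - ‖w‖)]

theorem norm_sub_normalize_sub_le {p q w v : F} (hp : ‖p‖ = 1) (hq : ‖q‖ = 1)
    (hw : 1 ≤ ‖w‖) (hv : 1 ≤ ‖v‖) (hpw : ‖p - w‖ ≤ 1) (hqv : ‖q - v‖ ≤ 1) :
    ‖(q - ‖v‖⁻¹ • v) - (p - ‖w‖⁻¹ • w)‖
      ≤ 4 * ‖(q - v) - (p - w)‖ + ‖q - p‖ * (‖q - v‖ + ‖p - w‖) := by
  have ha : 0 < ‖w‖ := zero_lt_one.trans_le hw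
  have hb : 0 < ‖v‖ := zero_lt_one.trans_le hv
  have hsplit : (q - ‖v‖⁻¹ • v) - (p - ‖w‖⁻¹ • w) = ((q - v) - (p - w))
      + (1 - ‖v‖⁻¹) • ((q - p) - ((q - v) - (p - w))) + (‖w‖⁻¹ - ‖v‖⁻¹) • w := by
    module
  have hc0 : 0 ≤ 1 - ‖v‖⁻¹ := sub_nonneg.2 (inv_le_one_of_one_le₀ hv)
  have hc1 : 1 - ‖v‖⁻¹ ≤ 1 := sub_le_self _ (inv_nonneg.2 hb.le)
  have hcy : 1 - ‖v‖⁻¹ ≤ ‖q - v‖ := one_sub_inv_norm_le hq hv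
  have hmid : ‖(1 - ‖v‖⁻¹) • ((q - p) - ((q - v) - (p - w)))‖
      ≤ ‖q - v‖ * ‖q - p‖ + ‖(q - v) - (p - w)‖ := by
    rw [norm_smul, Real.norm_of_nonneg hc0]
    calc _ ≤ (1 - ‖v‖⁻¹) * (‖q - p‖ + ‖(q - v) - (p - w)‖) := by
          gcongr
          exact norm_sub_le _ _
      _ ≤ _ := by nlinarith [norm_nonneg (q - p), norm_nonneg ((q - v) - (p - w))]
  have hlast : ‖(‖w‖⁻¹ - ‖v‖⁻¹) • w‖ ≤ |‖v‖ - ‖w‖| := by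
    have : (‖w‖⁻¹ - ‖v‖⁻¹) * ‖w‖ = (‖v‖ - ‖w‖) / ‖v‖ := by
      field_simp
    rw [norm_smul, Real.norm_eq_abs, ← abs_of_pos ha, ← abs_mul, abs_of_pos ha, this,
      abs_div, abs_of_pos hb]
    exact div_le_self (abs_nonneg _) hv
  have hnorms := abs_norm_sub_norm_le_of_unit hp hq hw hv hpw hqv
  rw [hsplit]
  calc _ ≤ ‖(q - v) - (p - w)‖ + ‖(1 - ‖v‖⁻¹) • ((q - p) - ((q - v) - (p - w)))‖
        + ‖(‖w‖⁻¹ - ‖v‖⁻¹) • w‖ := norm_add₃_le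
    _ ≤ _ := by linarith

end Pointwise

theorem Real.sqrt_le_mul_sqrt_add_sqrt {X A B c : ℝ} (hA : 0 ≤ A) (hB : 0 ≤ B) (hc : 0 ≤ c)
    (h : X ≤ c ^ 2 * (A + B)) : √X ≤ c * (√A + √B) := by
  refine Real.sqrt_le_iff.2 ⟨by positivity, ?_⟩
  nlinarith [Real.sq_sqrt hA, Real.sq_sqrt hB,
    mul_nonneg (sq_nonneg c) (mul_nonneg (Real.sqrt_nonneg A) (Real.sqrt_nonneg B))]

section Grid

variable {N : ℕ}

theorem norm_fd_normalize_le (h : ℝ) (r : Fin 3) {p w : GridFun N} (hp : ∀ I, ‖p I‖ = 1)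
    (hw : ∀ I, 1 ≤ ‖w I‖) (hpw : ∀ I, ‖p I - w I‖ ≤ 1) (I : Idx N) :
    ‖fd h r (fun I => p I - ‖w I‖⁻¹ • w I) I‖
      ≤ 4 * ‖fd h r (fun I => p I - w I) I‖
        + ‖fd h r p I‖ * (‖p (I + Pi.single r 1) - w (I + Pi.single r 1)‖ + ‖p I - w I‖) := by
  set J := I + Pi.single r 1
  simp only [fd, norm_smul]
  calc _ ≤ ‖1 / h‖ * (4 * ‖(p J - w J) - (p I - w I)‖
          + ‖p J - p I‖ * (‖p J - w J‖ + ‖p I - w I‖)) :=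
        mul_le_mul_of_nonneg_left
          (norm_sub_normalize_sub_le (hp I) (hp J) (hw I) (hw J) (hpw I) (hpw J))
          (norm_nonneg _)
    _ = _ := by ring

variable [NeZero N]

theorem norm_le_inorm (f : GridFun N) (I : Idx N) : ‖f I‖ ≤ inorm f :=
  le_ciSup (f := fun I => ‖f I‖) (Finite.bddAbove_range _) I

theorem norm_fd_le_ginorm (h : ℝ) (f : GridFun N) (I : Idx N) (r : Fin 3) :
    ‖fd h r f I‖ ≤ ginorm h f :=
  (le_ciSup (Finite.bddAbove_range _) r).trans (le_ciSup (Finite.bddAbove_range (fun I =>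
    ⨆ r : Fin 3, ‖fd h r f I‖)) I)

theorem l2sq_nonneg {h : ℝ} (h0 : 0 ≤ h) (f : GridFun N) : 0 ≤ l2sq h f := by
  unfold l2sq
  positivity

theorem gradsq_nonneg {h : ℝ} (h0 : 0 ≤ h) (f : GridFun N) : 0 ≤ gradsq h f := by
  unfold gradsq
  positivity

theorem gradsq_normalize_le {h : ℝ} (h0 : 0 ≤ h) {p w : GridFun N} (hp : ∀ I, ‖p I‖ = 1)
    (hw : ∀ I, 1 ≤ ‖w I‖) (hpw : ∀ I, ‖p I - w I‖ ≤ 1) :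
    gradsq h (fun I => p I - ‖w I‖⁻¹ • w I)
      ≤ 48 * gradsq h (fun I => p I - w I) + 18 * ginorm h p ^ 2 * l2sq h (fun I => p I - w I) := by
  set G := ginorm h p
  set e : GridFun N := fun I => p I - w I
  have hpt : ∀ I r, ‖fd h r (fun I => p I - ‖w I‖⁻¹ • w I) I‖ ^ 2
      ≤ 48 * ‖fd h r e I‖ ^ 2 + 3 * G ^ 2 * ‖e (I + Pi.single r 1)‖ ^ 2
        + 3 * G ^ 2 * ‖e I‖ ^ 2 := by
    intro I r
    have hG := norm_fd_le_ginorm h p I r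
    have hG0 : 0 ≤ G := (norm_nonneg _).trans hG
    have h1 : ‖fd h r (fun I => p I - ‖w I‖⁻¹ • w I) I‖
        ≤ 4 * ‖fd h r e I‖ + G * ‖e (I + Pi.single r 1)‖ + G * ‖e I‖ := by
      refine (norm_fd_normalize_le h r hp hw hpw I).trans ?_
      rw [add_assoc, ← mul_add]
      gcongr
    have h2 := pow_le_pow_left₀ (norm_nonneg _) h1 2
    nlinarith [sq_nonneg (4 * ‖fd h r e I‖ - G * ‖e (I + Pi.single r 1)‖),
      sq_nonneg (4 * ‖fd h r e I‖ - G * ‖e I‖),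
      sq_nonneg (G * ‖e (I + Pi.single r 1)‖ - G * ‖e I‖)]
  have hshift : ∑ I : Idx N, ∑ r : Fin 3, ‖e (I + Pi.single r 1)‖ ^ 2
      = 3 * ∑ I : Idx N, ‖e I‖ ^ 2 := by
    have htranslate : ∀ r : Fin 3, ∑ I : Idx N, ‖e (I + Pi.single r 1)‖ ^ 2
        = ∑ I : Idx N, ‖e I‖ ^ 2 := fun r =>
      Fintype.sum_equiv (Equiv.addRight _) _ _ fun _ => rfl
    rw [Finset.sum_comm]
    simp only [htranslate, Finset.sum_const, Finset.card_univ, Fintype.card_fin, nsmul_eq_mul]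
    norm_num
  have hsum : ∑ I : Idx N, ∑ r : Fin 3, (48 * ‖fd h r e I‖ ^ 2
        + 3 * G ^ 2 * ‖e (I + Pi.single r 1)‖ ^ 2 + 3 * G ^ 2 * ‖e I‖ ^ 2)
      = 48 * ∑ I : Idx N, ∑ r : Fin 3, ‖fd h r e I‖ ^ 2 + 18 * G ^ 2 * ∑ I : Idx N, ‖e I‖ ^ 2 := by
    simp only [Finset.sum_add_distrib, ← Finset.mul_sum, hshift, Finset.sum_const,
      Finset.card_univ, Fintype.card_fin, nsmul_eq_mul]
    ring
  unfold gradsq l2sq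
  calc _ ≤ h ^ 3 * ∑ I : Idx N, ∑ r : Fin 3, (48 * ‖fd h r e I‖ ^ 2
          + 3 * G ^ 2 * ‖e (I + Pi.single r 1)‖ ^ 2 + 3 * G ^ 2 * ‖e I‖ ^ 2) := by
        gcongr with I _ r _
        exact hpt I r
    _ = _ := by rw [hsum]; ring

end Grid

/-- gradient estimate for the renormalized error. -/
theorem statement16 :
    (∃ C : ℝ, 0 < C ∧
      ∀ (N : ℕ) [NeZero N] (p w : GridFun N),
        (∀ I, ‖p I‖ = 1) → (∀ I, 1 ≤ ‖w I‖) →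
        inorm (fun I => p I - w I) ≤ 1 →
        gradsq (1 / (N : ℝ)) (fun I => p I - ‖w I‖⁻¹ • w I)
          ≤ C * ((1 + inorm (fun I => p I - w I) ^ 2)
                  * gradsq (1 / (N : ℝ)) (fun I => p I - w I)
                + ginorm (1 / (N : ℝ)) p ^ 2 * l2sq (1 / (N : ℝ)) (fun I => p I - w I))) ∧
    ∃ M : ℝ → ℝ, (∀ x : ℝ, 0 < M x) ∧
      ∀ (N : ℕ) [NeZero N] (p w : GridFun N),
        (∀ I, ‖p I‖ = 1) → (∀ I, 1 ≤ ‖w I‖) →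
        inorm (fun I => p I - w I) ≤ 1 →
        Real.sqrt (gradsq (1 / (N : ℝ)) (fun I => p I - ‖w I‖⁻¹ • w I))
          ≤ M (ginorm (1 / (N : ℝ)) p) *
              (Real.sqrt (l2sq (1 / (N : ℝ)) (fun I => p I - w I))
                + Real.sqrt (gradsq (1 / (N : ℝ)) (fun I => p I - w I))) := by
  have hmain : ∀ (N : ℕ) [NeZero N] (p w : GridFun N), (∀ I, ‖p I‖ = 1) → (∀ I, 1 ≤ ‖w I‖) →
      inorm (fun I => p I - w I) ≤ 1 →
      gradsq (1 / (N : ℝ)) (fun I => p I - ‖w I‖⁻¹ • w I)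
        ≤ 48 * gradsq (1 / (N : ℝ)) (fun I => p I - w I)
          + 18 * ginorm (1 / (N : ℝ)) p ^ 2 * l2sq (1 / (N : ℝ)) (fun I => p I - w I) :=
    fun N _ p w hp hw hinorm => gradsq_normalize_le (by positivity) hp hw fun I =>
      (norm_le_inorm (fun I => p I - w I) I).trans hinorm
  refine ⟨⟨48, by norm_num, fun N _ p w hp hw hinorm => ?_⟩,
    ⟨fun x => 7 * (1 + |x|), fun x => by positivity, fun N _ p w hp hw hinorm => ?_⟩⟩
  · have hA := gradsq_nonneg (N := N) (h := 1 / (N : ℝ)) (by positivity) (fun I => p I - w I)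
    have hB := l2sq_nonneg (N := N) (h := 1 / (N : ℝ)) (by positivity) (fun I => p I - w I)
    nlinarith [hmain N p w hp hw hinorm, mul_nonneg (sq_nonneg (inorm fun I => p I - w I)) hA,
      mul_nonneg (sq_nonneg (ginorm (1 / (N : ℝ)) p)) hB]
  · set x := ginorm (1 / (N : ℝ)) p
    have hA := gradsq_nonneg (N := N) (h := 1 / (N : ℝ)) (by positivity) (fun I => p I - w I)
    have hB := l2sq_nonneg (N := N) (h := 1 / (N : ℝ)) (by positivity) (fun I => p I - w I)
    refine Real.sqrt_le_mul_sqrt_add_sqrt hB hA (by positivity) ?_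
    nlinarith [hmain N p w hp hw hinorm, sq_abs x, abs_nonneg x, mul_nonneg (abs_nonneg x) hA,
      mul_nonneg (abs_nonneg x) hB, mul_nonneg (sq_nonneg x) hA]
end
end
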